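/- The Schröder path partition function satisfies $Z_{(i,0)\to(0,j)} = z_j(q^{2i})$ where $z_j(t) = \sum_{k=0}^{j} \gamma^k q^{k^2} \begin{bmatrix} j \\ k \end{bmatrix}_{q^2} \prod_{s=1}^{j} \frac{t q^{2(s-k)} - 1}{q^{2s}-1}$ is a polynomial of degree $j$ in $t$; here $\begin{bmatrix} j \\ k \end{bmatrix}_{q^2}$ is the $q^2$-binomial coefficient. -/

import Mathlib

/-- A step of a Schröder path: up `(0,1)`, left `(-1,0)`, or diagonal `(-1,1)`. -/
inductive SStep
  | up
  | left
  | diag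
deriving DecidableEq

instance : Fintype SStep :=
  ⟨{SStep.up, SStep.left, SStep.diag}, by intro s; cases s <;> decide⟩

/-- The result of taking a step from a given position. -/
def stepMove : ℤ × ℤ → SStep → ℤ × ℤ
  | (x, y), SStep.up => (x, y + 1)
  | (x, y), SStep.left => (x - 1, y)
  | (x, y), SStep.diag => (x - 1, y + 1)

/-- Endpoint of a walk starting at `p` and taking the steps in the list. -/
def endPos : ℤ × ℤ → List SStep → ℤ × ℤ
  | p, [] => p
  | p, s :: rest => endPos (stepMove p s) rest

/-- The area to the left of the path, `∑ (x_s + x_{s+1}) (y_{s+1} - y_s)`: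
an up step from `(x,y)` contributes `2x`, a diagonal step `2x - 1`, a left step `0`. -/
def areaOf : ℤ × ℤ → List SStep → ℤ
  | _, [] => 0
  | (x, y), SStep.up :: rest => 2 * x + areaOf (x, y + 1) rest
  | (x, y), SStep.left :: rest => areaOf (x - 1, y) rest
  | (x, y), SStep.diag :: rest => (2 * x - 1) + areaOf (x - 1, y + 1) rest

/-- All lists of steps of length `n`. -/
def allLists : ℕ → Finset (List SStep)
  | 0 => {[]}
  | n + 1 => Finset.univ.biUnion fun s : SStep => (allLists n).image fun l => s :: l

/-- The (finite) set of Schröder paths from `(i,0)` to `(0,j)`, encoded as their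
lists of steps read from the starting point `(i,0)`. -/
def pathFinset (i j : ℕ) : Finset (List SStep) :=
  ((Finset.range (i + j + 1)).biUnion allLists).filter
    fun p => endPos ((i : ℤ), 0) p = (0, (j : ℤ))

/-- Number of diagonal steps of a path. -/
def diagCount (p : List SStep) : ℕ := p.count SStep.diag

/-- The partition function `Z_{(i,0)→(0,j)} = ∑_p γ^{k(p)} q^{A(p)}` of weighted
Schröder paths from `(i,0)` to `(0,j)`. -/
def Zpf {R : Type*} [CommRing R] (γ q : R) (i j : ℕ) : R :=
  ∑ p ∈ pathFinset i j, γ ^ diagCount p * q ^ (areaOf ((i : ℤ), 0) p).toNat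
/-- The `q²`-binomial coefficient `[j; k]_{q²}`. -/
noncomputable def qBinom (q : ℝ) (j k : ℕ) : ℝ :=
  (∏ s ∈ Finset.Icc 1 j, (q ^ (2 * s) - 1)) /
    ((∏ s ∈ Finset.Icc 1 k, (q ^ (2 * s) - 1)) * ∏ s ∈ Finset.Icc 1 (j - k), (q ^ (2 * s) - 1))

/-- The polynomial `z_j(t) = ∑_{k=0}^j γ^k q^{k²} [j;k]_{q²} ∏_{s=1}^j (t q^{2(s-k)}-1)/(q^{2s}-1)`. -/
noncomputable def zFun (γ q : ℝ) (j : ℕ) (t : ℝ) : ℝ :=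
  ∑ k ∈ Finset.range (j + 1),
    γ ^ k * q ^ (k ^ 2) * qBinom q j k *
      ∏ s ∈ Finset.Icc 1 j, (t * q ^ (2 * s) / q ^ (2 * k) - 1) / (q ^ (2 * s) - 1)

/-!
Both sides satisfy the same recursion in `(i, j)` with the same boundary values. Splitting a path
by its first step (up, left or diagonal) gives
`Z(i+1, j+1) = q^{2(i+1)} Z(i+1, j) + Z(i, j+1) + γ q^{2i+1} Z(i, j)`, and `Z(i, 0) = Z(0, j) = 1`
since those paths are straight lines of zero area. With `t = q^{2i}` the recursion becomes
`z_{j+1}(q² t) = q² t z_j(q² t) + z_{j+1}(t) + γ q t z_j(t)`, which holds summand by summand in `k`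
thanks to the `q²`-Pascal rule and the shift `t ↦ q² t`, `k ↦ k + 1` of the product in `z_j`.
Moreover `z_0 = 1`, and `z_j(1) = 1` because for `k ≥ 1` the factor `s = k` of the product vanishes.
Polynomiality is read off the formula: every summand is a product of `j` affine functions of `t`.
-/

def pathWidth (l : List SStep) : ℕ := l.count .left + l.count .diag

def pathHeight (l : List SStep) : ℕ := l.count .up + l.count .diag

@[simp] lemma pathWidth_nil : pathWidth [] = 0 := rfl

@[simp] lemma pathHeight_nil : pathHeight [] = 0 := rfl

@[simp] lemma pathWidth_up_cons (l : List SStep) : pathWidth (.up :: l) = pathWidth l := by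
  simp [pathWidth]

@[simp] lemma pathWidth_left_cons (l : List SStep) :
    pathWidth (.left :: l) = pathWidth l + 1 := by
  simp [pathWidth]; omega

@[simp] lemma pathWidth_diag_cons (l : List SStep) :
    pathWidth (.diag :: l) = pathWidth l + 1 := by
  simp [pathWidth]; omega

@[simp] lemma pathHeight_up_cons (l : List SStep) :
    pathHeight (.up :: l) = pathHeight l + 1 := by
  simp [pathHeight]; omega

@[simp] lemma pathHeight_left_cons (l : List SStep) :
    pathHeight (.left :: l) = pathHeight l := by
  simp [pathHeight]

@[simp] lemma pathHeight_diag_cons (l : List SStep) :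
    pathHeight (.diag :: l) = pathHeight l + 1 := by
  simp [pathHeight]; omega

lemma length_eq_count_up_add_pathWidth (l : List SStep) :
    l.length = l.count .up + pathWidth l := by
  induction l with
  | nil => rfl
  | cons s l ih => cases s <;> simp [ih] <;> omega

lemma endPos_eq (l : List SStep) :
    ∀ x y : ℤ, endPos (x, y) l = (x - pathWidth l, y + pathHeight l) := by
  induction l with
  | nil => simp [endPos]
  | cons s l ih =>
    intro x y
    cases s <;> simp [endPos, stepMove, ih] <;> omega

lemma mem_allLists {l : List SStep} {n : ℕ} : l ∈ allLists n ↔ l.length = n := by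
  induction n generalizing l with
  | zero => simp [allLists, List.length_eq_zero_iff]
  | succ n ih =>
    cases l <;> simp [allLists, ih]

lemma mem_pathFinset {p : List SStep} {i j : ℕ} :
    p ∈ pathFinset i j ↔ pathWidth p = i ∧ pathHeight p = j := by
  have hlen := length_eq_count_up_add_pathWidth p
  have hup : p.count .up ≤ pathHeight p := Nat.le_add_right _ _
  simp only [pathFinset, Finset.mem_filter, Finset.mem_biUnion, Finset.mem_range, mem_allLists,
    endPos_eq, exists_eq_right', Prod.mk.injEq]
  omega

lemma areaOf_indep_snd (l : List SStep) : ∀ x y y' : ℤ, areaOf (x, y) l = areaOf (x, y') l := by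
  induction l with
  | nil => intros; rfl
  | cons s l ih => intro x y y'; cases s <;> simp only [areaOf, ih _ (y + 1) (y' + 1), ih _ y y']

-- `Zpf` weights a path by `q ^ (areaOf …).toNat`; nonnegativity makes that exponent additive.
lemma areaOf_nonneg (l : List SStep) :
    ∀ x y : ℤ, (pathWidth l : ℤ) ≤ x → 0 ≤ areaOf (x, y) l := by
  induction l with
  | nil => intros; rfl
  | cons s l ih =>
    intro x y hx
    have hl : (0 : ℤ) ≤ pathWidth l := Nat.cast_nonneg _
    cases s <;> simp only [areaOf] <;> push_cast [pathWidth_up_cons, pathWidth_left_cons,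
      pathWidth_diag_cons] at hx
    · linarith [ih x (y + 1) hx]
    · exact ih (x - 1) y (by linarith)
    · linarith [ih (x - 1) (y + 1) (by linarith)]

lemma toNat_areaOf_up_cons {x : ℕ} {l : List SStep} (hl : pathWidth l ≤ x) :
    (areaOf ((x : ℤ), 0) (.up :: l)).toNat = 2 * x + (areaOf ((x : ℤ), 0) l).toNat := by
  have := areaOf_nonneg l x 0 (by exact_mod_cast hl)
  rw [areaOf, areaOf_indep_snd l _ _ 0]
  omega

lemma toNat_areaOf_diag_cons {x : ℕ} {l : List SStep} (hl : pathWidth l ≤ x) :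
    (areaOf (((x + 1 : ℕ) : ℤ), 0) (.diag :: l)).toNat
      = 2 * x + 1 + (areaOf ((x : ℤ), 0) l).toNat := by
  have := areaOf_nonneg l x 0 (by exact_mod_cast hl)
  rw [areaOf, areaOf_indep_snd l _ _ 0]
  push_cast
  simp only [add_sub_cancel_right]
  omega

lemma pathHeight_eq_zero_iff {l : List SStep} : pathHeight l = 0 ↔ ∀ s ∈ l, s = .left := by
  induction l with
  | nil => simp
  | cons s l ih => cases s <;> simp [ih]

lemma pathWidth_eq_zero_iff {l : List SStep} : pathWidth l = 0 ↔ ∀ s ∈ l, s = .up := by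
  induction l with
  | nil => simp
  | cons s l ih => cases s <;> simp [ih]

lemma pathFinset_zero_right (i : ℕ) : pathFinset i 0 = {List.replicate i .left} := by
  ext p
  rw [mem_pathFinset, Finset.mem_singleton, List.eq_replicate_iff, ← pathHeight_eq_zero_iff,
    length_eq_count_up_add_pathWidth, pathWidth, pathHeight]
  omega

lemma pathFinset_zero_left (j : ℕ) : pathFinset 0 j = {List.replicate j .up} := by
  ext p
  rw [mem_pathFinset, Finset.mem_singleton, List.eq_replicate_iff, ← pathWidth_eq_zero_iff,
    length_eq_count_up_add_pathWidth, pathWidth, pathHeight]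
  omega

lemma areaOf_replicate_left (n : ℕ) (x y : ℤ) : areaOf (x, y) (List.replicate n .left) = 0 := by
  induction n generalizing x with
  | zero => rfl
  | succ n ih => simp [List.replicate_succ, areaOf, ih]

lemma areaOf_replicate_up (n : ℕ) (y : ℤ) : areaOf (0, y) (List.replicate n .up) = 0 := by
  induction n generalizing y with
  | zero => rfl
  | succ n ih => simp [List.replicate_succ, areaOf, ih]

lemma diagCount_up_cons (l : List SStep) : diagCount (.up :: l) = diagCount l :=
  List.count_cons_of_ne (by decide)

lemma diagCount_left_cons (l : List SStep) : diagCount (.left :: l) = diagCount l :=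
  List.count_cons_of_ne (by decide)

lemma diagCount_diag_cons (l : List SStep) : diagCount (.diag :: l) = diagCount l + 1 :=
  List.count_cons_self

lemma pathFinset_succ_succ (i j : ℕ) :
    pathFinset (i + 1) (j + 1) =
      (pathFinset (i + 1) j).image (.up :: ·) ∪ (pathFinset i (j + 1)).image (.left :: ·) ∪
        (pathFinset i j).image (.diag :: ·) := by
  ext p
  simp only [Finset.mem_union, Finset.mem_image, mem_pathFinset]
  constructor
  · rcases p with _ | ⟨_ | _ | _, r⟩ <;> simp
  · rintro ((⟨r, ⟨h1, h2⟩, rfl⟩ | ⟨r, ⟨h1, h2⟩, rfl⟩) | ⟨r, ⟨h1, h2⟩, rfl⟩) <;> simp [h1, h2]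

section CommRing

variable {R : Type*} [CommRing R]

lemma Zpf_zero_right (γ q : R) (i : ℕ) : Zpf γ q i 0 = 1 := by
  simp [Zpf, pathFinset_zero_right, diagCount, List.count_replicate, areaOf_replicate_left]

lemma Zpf_zero_left (γ q : R) (j : ℕ) : Zpf γ q 0 j = 1 := by
  simp [Zpf, pathFinset_zero_left, diagCount, List.count_replicate, areaOf_replicate_up]

lemma Zpf_succ_succ (γ q : R) (i j : ℕ) :
    Zpf γ q (i + 1) (j + 1) =
      q ^ (2 * (i + 1)) * Zpf γ q (i + 1) j + Zpf γ q i (j + 1) +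
        γ * q ^ (2 * i + 1) * Zpf γ q i j := by
  have hdisj₁ : Disjoint ((pathFinset (i + 1) j).image (.up :: ·))
      ((pathFinset i (j + 1)).image (.left :: ·)) := by
    simp [Finset.disjoint_left]
  have hdisj₂ : Disjoint ((pathFinset (i + 1) j).image (.up :: ·) ∪
      (pathFinset i (j + 1)).image (.left :: ·)) ((pathFinset i j).image (.diag :: ·)) := by
    simp only [Finset.disjoint_left, Finset.mem_union, Finset.mem_image]
    rintro _ (⟨_, -, rfl⟩ | ⟨_, -, rfl⟩) ⟨_, -, h⟩ <;> simp at h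
  rw [Zpf, pathFinset_succ_succ, Finset.sum_union hdisj₂, Finset.sum_union hdisj₁,
    Finset.sum_image (by simp), Finset.sum_image (by simp), Finset.sum_image (by simp),
    Zpf, Zpf, Zpf, Finset.mul_sum, Finset.mul_sum]
  congr 1
  congr 1
  · refine Finset.sum_congr rfl fun r hr => ?_
    rw [toNat_areaOf_up_cons (mem_pathFinset.1 hr).1.le, diagCount_up_cons, pow_add]
    ring
  · refine Finset.sum_congr rfl fun r _ => ?_
    rw [diagCount_left_cons, areaOf, Nat.cast_succ, add_sub_cancel_right]
  · refine Finset.sum_congr rfl fun r hr => ?_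
    rw [toNat_areaOf_diag_cons (mem_pathFinset.1 hr).1.le, diagCount_diag_cons,
      pow_add, pow_add]
    ring

end CommRing

-- `(q²; q²)_j` up to the sign `(-1)^j`.
noncomputable def qFact (q : ℝ) (j : ℕ) : ℝ := ∏ s ∈ Finset.Icc 1 j, (q ^ (2 * s) - 1)

noncomputable def zNum (q t : ℝ) (j k : ℕ) : ℝ :=
  ∏ s ∈ Finset.Icc 1 j, (t * q ^ (2 * s) / q ^ (2 * k) - 1)

noncomputable def zTerm (γ q : ℝ) (j k : ℕ) (t : ℝ) : ℝ :=
  γ ^ k * q ^ (k ^ 2) * qBinom q j k * (zNum q t j k / qFact q j)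

lemma qBinom_eq_qFact (q : ℝ) (j k : ℕ) :
    qBinom q j k = qFact q j / (qFact q k * qFact q (j - k)) := rfl

lemma zFun_eq_sum_zTerm (γ q : ℝ) (j : ℕ) (t : ℝ) :
    zFun γ q j t = ∑ k ∈ Finset.range (j + 1), zTerm γ q j k t := by
  refine Finset.sum_congr rfl fun k _ => ?_
  rw [zTerm, zNum, qFact, ← Finset.prod_div_distrib]

@[simp] lemma qFact_zero (q : ℝ) : qFact q 0 = 1 := rfl

lemma qFact_succ (q : ℝ) (j : ℕ) : qFact q (j + 1) = qFact q j * (q ^ (2 * (j + 1)) - 1) :=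
  Finset.prod_Icc_succ_top (by omega) _

lemma pow_two_mul_sub_one_ne_zero {q : ℝ} (hq2 : q ^ 2 ≠ 1) {s : ℕ} (hs : s ≠ 0) :
    q ^ (2 * s) - 1 ≠ 0 := by
  rw [sub_ne_zero, pow_mul, ne_eq, pow_eq_one_iff_of_nonneg (sq_nonneg q) hs]
  exact hq2

lemma qFact_ne_zero {q : ℝ} (hq2 : q ^ 2 ≠ 1) (j : ℕ) : qFact q j ≠ 0 :=
  Finset.prod_ne_zero_iff.2 fun _ hs =>
    pow_two_mul_sub_one_ne_zero hq2 (Nat.one_le_iff_ne_zero.1 (Finset.mem_Icc.1 hs).1)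

lemma qBinom_succ_succ {q : ℝ} (hq2 : q ^ 2 ≠ 1) {j m : ℕ} (hm : m < j) :
    qBinom q (j + 1) (m + 1) = q ^ (2 * (m + 1)) * qBinom q j (m + 1) + qBinom q j m := by
  obtain ⟨r, rfl⟩ : ∃ r, j = m + 1 + r := ⟨j - (m + 1), by omega⟩
  have hm := pow_two_mul_sub_one_ne_zero hq2 (m.succ_ne_zero)
  have hr := pow_two_mul_sub_one_ne_zero hq2 (r.succ_ne_zero)
  have := qFact_ne_zero hq2 m
  have := qFact_ne_zero hq2 r
  rw [qBinom_eq_qFact, qBinom_eq_qFact, qBinom_eq_qFact,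
    show m + 1 + r + 1 - (m + 1) = r + 1 by omega, show m + 1 + r - (m + 1) = r by omega,
    show m + 1 + r - m = r + 1 by omega, qFact_succ q (m + 1 + r), qFact_succ q m, qFact_succ q r,
    show 2 * (m + 1 + r + 1) = 2 * (m + 1) + 2 * (r + 1) by ring, pow_add]
  field_simp
  ring

lemma zNum_zero (q t : ℝ) (k : ℕ) : zNum q t 0 k = 1 := rfl

lemma zNum_succ (q t : ℝ) (j k : ℕ) :
    zNum q t (j + 1) k = zNum q t j k * (t * q ^ (2 * (j + 1)) / q ^ (2 * k) - 1) :=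
  Finset.prod_Icc_succ_top (by omega) _

lemma zNum_succ_succ {q : ℝ} (hq : q ≠ 0) (t : ℝ) (j m : ℕ) :
    zNum q t (j + 1) (m + 1) = (t / q ^ (2 * m) - 1) * zNum q t j m := by
  induction j with
  | zero =>
    rw [zNum_succ, zNum_zero, zNum_zero, show 2 * (m + 1) = 2 * m + 2 * 1 by ring, pow_add]
    field_simp
  | succ j ih =>
    rw [zNum_succ, ih, zNum_succ, show 2 * (m + 1) = 2 * m + 2 by ring,
      show 2 * (j + 1 + 1) = 2 * (j + 1) + 2 by ring, pow_add, pow_add]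
    field_simp

lemma zNum_sq_mul_succ {q : ℝ} (hq : q ≠ 0) (t : ℝ) (j m : ℕ) :
    zNum q (q ^ 2 * t) j (m + 1) = zNum q t j m := by
  refine Finset.prod_congr rfl fun s _ => ?_
  rw [show 2 * (m + 1) = 2 * m + 2 by ring, pow_add]
  field_simp

lemma zNum_succ_sub_zNum_succ_succ {q : ℝ} (hq : q ≠ 0) (t : ℝ) (j m : ℕ) :
    zNum q t (j + 1) m - zNum q t (j + 1) (m + 1)
      = t / q ^ (2 * m) * (q ^ (2 * (j + 1)) - 1) * zNum q t j m := by
  rw [zNum_succ, zNum_succ_succ hq]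
  ring

lemma zTerm_succ_zero {q : ℝ} (hq : q ≠ 0) (hq2 : q ^ 2 ≠ 1) (γ : ℝ) (j : ℕ) (t : ℝ) :
    zTerm γ q (j + 1) 0 (q ^ 2 * t) - zTerm γ q (j + 1) 0 t =
      q ^ 2 * t * zTerm γ q j 0 (q ^ 2 * t) := by
  have := qFact_ne_zero hq2 j
  have := pow_two_mul_sub_one_ne_zero hq2 j.succ_ne_zero
  simp only [zTerm]
  rw [← zNum_sq_mul_succ hq t (j + 1) 0, ← mul_sub, ← sub_div, zNum_succ_sub_zNum_succ_succ hq,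
    qBinom_eq_qFact, qBinom_eq_qFact, Nat.sub_zero, Nat.sub_zero, qFact_zero, qFact_succ]
  field_simp
  ring

lemma zTerm_succ_succ {q : ℝ} (hq : q ≠ 0) (hq2 : q ^ 2 ≠ 1) (γ : ℝ) {j m : ℕ} (hm : m < j)
    (t : ℝ) :
    zTerm γ q (j + 1) (m + 1) (q ^ 2 * t) - zTerm γ q (j + 1) (m + 1) t =
      q ^ 2 * t * zTerm γ q j (m + 1) (q ^ 2 * t) + γ * (q * t) * zTerm γ q j m t := by
  have := qFact_ne_zero hq2 j
  have := pow_two_mul_sub_one_ne_zero hq2 j.succ_ne_zero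
  have := pow_ne_zero (2 * m) hq
  simp only [zTerm]
  rw [zNum_sq_mul_succ hq t (j + 1) m, zNum_sq_mul_succ hq t j m, ← mul_sub, ← sub_div,
    zNum_succ_sub_zNum_succ_succ hq, qBinom_succ_succ hq2 hm, qFact_succ,
    show (m + 1) ^ 2 = m ^ 2 + (2 * m + 1) by ring, show 2 * (m + 1) = 2 * m + 2 by ring,
    pow_add, pow_add]
  field_simp
  ring

lemma zTerm_succ_self {q : ℝ} (hq : q ≠ 0) (hq2 : q ^ 2 ≠ 1) (γ : ℝ) (j : ℕ) (t : ℝ) :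
    zTerm γ q (j + 1) (j + 1) (q ^ 2 * t) - zTerm γ q (j + 1) (j + 1) t =
      γ * (q * t) * zTerm γ q j j t := by
  have := qFact_ne_zero hq2 j
  have := pow_two_mul_sub_one_ne_zero hq2 j.succ_ne_zero
  have := pow_ne_zero (2 * j) hq
  simp only [zTerm]
  rw [zNum_sq_mul_succ hq t (j + 1) j, ← mul_sub, ← sub_div, zNum_succ_sub_zNum_succ_succ hq,
    qBinom_eq_qFact, qBinom_eq_qFact, Nat.sub_self, Nat.sub_self, qFact_zero, qFact_succ,
    show (j + 1) ^ 2 = j ^ 2 + (2 * j + 1) by ring, pow_add]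
  field_simp
  ring

lemma zFun_succ_sq_mul {q : ℝ} (hq : q ≠ 0) (hq2 : q ^ 2 ≠ 1) (γ : ℝ) (j : ℕ) (t : ℝ) :
    zFun γ q (j + 1) (q ^ 2 * t) =
      q ^ 2 * t * zFun γ q j (q ^ 2 * t) + zFun γ q (j + 1) t + γ * (q * t) * zFun γ q j t := by
  suffices ∑ k ∈ Finset.range (j + 2), (zTerm γ q (j + 1) k (q ^ 2 * t) - zTerm γ q (j + 1) k t) =
      q ^ 2 * t * zFun γ q j (q ^ 2 * t) + γ * (q * t) * zFun γ q j t by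
    rw [Finset.sum_sub_distrib, ← zFun_eq_sum_zTerm, ← zFun_eq_sum_zTerm] at this
    linarith
  rw [Finset.sum_range_succ, Finset.sum_range_succ',
    Finset.sum_congr rfl fun m hm => zTerm_succ_succ hq hq2 γ (Finset.mem_range.1 hm) t,
    Finset.sum_add_distrib, zTerm_succ_zero hq hq2, zTerm_succ_self hq hq2,
    zFun_eq_sum_zTerm, zFun_eq_sum_zTerm, Finset.sum_range_succ' _ j, Finset.sum_range_succ _ j,
    mul_add, mul_add, Finset.mul_sum, Finset.mul_sum]
  ring

lemma zFun_zero (γ q t : ℝ) : zFun γ q 0 t = 1 := by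
  simp [zFun, qBinom]

lemma zNum_one_of_mem_Icc {q : ℝ} (hq : q ≠ 0) {j k : ℕ} (hk : k ∈ Finset.Icc 1 j) :
    zNum q 1 j k = 0 :=
  Finset.prod_eq_zero hk (by rw [one_mul, div_self (pow_ne_zero _ hq), sub_self])

lemma zFun_at_one {q : ℝ} (hq : q ≠ 0) (hq2 : q ^ 2 ≠ 1) (γ : ℝ) (j : ℕ) : zFun γ q j 1 = 1 := by
  rw [zFun_eq_sum_zTerm, Finset.sum_eq_single_of_mem 0 (by simp)]
  · have := qFact_ne_zero hq2 j
    simp [zTerm, zNum, qBinom_eq_qFact, ← qFact.eq_def, div_self this]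
  · intro k hk hk0
    rw [zTerm, zNum_one_of_mem_Icc hq (by simp at hk ⊢; omega), zero_div, mul_zero]

theorem Zpf_eq_zFun {q : ℝ} (hq : q ≠ 0) (hq2 : q ^ 2 ≠ 1) (γ : ℝ) (i j : ℕ) :
    Zpf γ q i j = zFun γ q j (q ^ (2 * i)) := by
  induction i generalizing j with
  | zero => rw [Zpf_zero_left, pow_zero, zFun_at_one hq hq2]
  | succ i ihi =>
    induction j with
    | zero => rw [Zpf_zero_right, zFun_zero]
    | succ j ihj =>
      have hsq : q ^ (2 * (i + 1)) = q ^ 2 * q ^ (2 * i) := by ring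
      have hodd : q ^ (2 * i + 1) = q * q ^ (2 * i) := by ring
      rw [Zpf_succ_succ, ihj, ihi, ihi, hsq, hodd, zFun_succ_sq_mul hq hq2]

theorem exists_polynomial_eval_eq_zFun (γ q : ℝ) (j : ℕ) :
    ∃ P : Polynomial ℝ, P.natDegree ≤ j ∧ ∀ t : ℝ, P.eval t = zFun γ q j t := by
  open Polynomial in
  refine ⟨∑ k ∈ Finset.range (j + 1), C (γ ^ k * q ^ (k ^ 2) * qBinom q j k) *
      ∏ s ∈ Finset.Icc 1 j,
        (C (q ^ (2 * s) / q ^ (2 * k) / (q ^ (2 * s) - 1)) * X + C (-(q ^ (2 * s) - 1)⁻¹)),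
    ?_, fun t => ?_⟩
  · refine natDegree_sum_le_of_forall_le _ _ fun k _ => ?_
    refine (natDegree_C_mul_le _ _).trans <| (natDegree_prod_le _ _).trans ?_
    refine (Finset.sum_le_card_nsmul _ _ 1 fun s _ => natDegree_linear_le).trans ?_
    simp
  · simp only [zFun, eval_finsetSum, eval_mul, eval_C, eval_prod, eval_add, eval_X]
    refine Finset.sum_congr rfl fun k _ => congrArg _ <| Finset.prod_congr rfl fun s _ => ?_
    ring

/-- The Schröder path partition function satisfies `Z_{(i,0)→(0,j)} = z_j(q^{2i})`,
where `z_j(t)` is a polynomial of degree (at most) `j` in `t`. -/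
theorem schroeder_partition_function_polynomiality (γ q : ℝ) (hq0 : 0 < q) (hq1 : q ≠ 1)
    (i j : ℕ) :
    Zpf γ q i j = zFun γ q j (q ^ (2 * i)) ∧
      ∃ P : Polynomial ℝ, P.natDegree ≤ j ∧ ∀ t : ℝ, P.eval t = zFun γ q j t := by
  have hq : q ≠ 0 := hq0.ne'
  have hq2 : q ^ 2 ≠ 1 := by
    rwa [ne_eq, pow_eq_one_iff_of_nonneg hq0.le two_ne_zero]
  exact ⟨Zpf_eq_zFun hq hq2 γ i j, exists_polynomial_eval_eq_zFun γ q j⟩
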